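/- For the metric space M described in the context (Example 5.2 of the paper): if f : M → ℝ is 1-Lipschitz and f(z) ∈ {0,1,2} for every z ∈ {x_1,x_2,x_3,y_1,y_2,y_3}, then there exists i ∈ {1,2,3} with |f(x_i) − f(y_i)| ≤ 1. -/
import Mathlib


/-- The underlying set of the metric space of Example 5.2:
points `x_i, y_i, u_i^j, v_i^j` for `i ∈ {1,2,3}` (coded by `Fin 3`)
and `j ∈ ℕ`. -/
inductive ExPt : Type
  | x : Fin 3 → ExPt
  | y : Fin 3 → ExPt
  | u : Fin 3 → ℕ → ExPt
  | v : Fin 3 → ℕ → ExPt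
deriving DecidableEq

namespace ExPt

/-- Adjacency: precisely the pairs at distance 1, namely
`y_i ~ x_{i+1}` (cyclically), `x_i ~ u_i^j`, `u_i^j ~ v_i^j`, `v_i^j ~ y_i`. -/
def adj : ExPt → ExPt → Bool
  | .y i, .x k => k == i + 1
  | .x k, .y i => k == i + 1
  | .x i, .u k _ => i == k
  | .u k _, .x i => i == k
  | .u i j, .v k l => i == k && j == l
  | .v k l, .u i j => i == k && j == l
  | .v i _, .y k => i == k
  | .y k, .v i _ => i == k
  | _, _ => false

lemma adj_symm (a b : ExPt) : adj a b = adj b a := by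
  cases a <;> cases b <;> rfl

/-- The distance of Example 5.2: `0` on the diagonal, `1` between adjacent
points, and `2` otherwise. -/
noncomputable def exDist (a b : ExPt) : ℝ :=
  if a = b then 0 else if adj a b then 1 else 2

lemma exDist_self (a : ExPt) : exDist a a = 0 := by simp [exDist]

lemma exDist_comm (a b : ExPt) : exDist a b = exDist b a := by
  unfold exDist
  rcases eq_or_ne a b with rfl | h
  · rfl
  · rw [if_neg h, if_neg (Ne.symm h), adj_symm]

lemma one_le_exDist {a b : ExPt} (h : a ≠ b) : 1 ≤ exDist a b := by
  unfold exDist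
  rw [if_neg h]
  split <;> norm_num

lemma exDist_le_two (a b : ExPt) : exDist a b ≤ 2 := by
  unfold exDist
  split
  · norm_num
  · split <;> norm_num

lemma exDist_triangle (a b c : ExPt) : exDist a c ≤ exDist a b + exDist b c := by
  rcases eq_or_ne a b with rfl | hab
  · rw [exDist_self, zero_add]
  rcases eq_or_ne b c with rfl | hbc
  · rw [exDist_self, add_zero]
  have h1 := one_le_exDist hab
  have h2 := one_le_exDist hbc
  have h3 := exDist_le_two a c
  linarith

lemma exDist_eq_zero {a b : ExPt} (h : exDist a b = 0) : a = b := by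
  by_contra hne
  have := one_le_exDist hne
  rw [h] at this
  norm_num at this

instance : TopologicalSpace ExPt := ⊥

instance : DiscreteTopology ExPt := ⟨rfl⟩

noncomputable instance : MetricSpace ExPt :=
  MetricSpace.ofDistTopology exDist exDist_self exDist_comm exDist_triangle
    (fun s => by
      constructor
      · intro _ x hx
        refine ⟨1 / 2, by norm_num, fun y hy => ?_⟩
        have : x = y := by
          by_contra hne
          have := one_le_exDist hne
          linarith
        rwa [← this]
      · intro _
        exact isOpen_discrete s)
    (fun a b h => exDist_eq_zero h)

lemma dist_def (a b : ExPt) : dist a b = exDist a b := rfl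

end ExPt

lemma stmt18_aux {a b : ℝ} (ha : a ∈ ({0, 1, 2} : Set ℝ))
    (hb : b ∈ ({0, 1, 2} : Set ℝ)) (h : 1 < |a - b|) :
    (a = 0 ∧ b = 2) ∨ (a = 2 ∧ b = 0) := by
  simp only [Set.mem_insert_iff, Set.mem_singleton_iff] at ha hb
  rcases ha with rfl|rfl|rfl <;> rcases hb with rfl|rfl|rfl <;>
    simp_all <;> norm_num at h

/-- Example 5.2: if `f` is 1-Lipschitz and takes values in `{0,1,2}` on the
points `x_i, y_i`, then `|f(x_i) - f(y_i)| ≤ 1` for some `i`. -/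
theorem stmt18 (f : ExPt → ℝ)
    (hf : ∀ a b : ExPt, |f a - f b| ≤ dist a b)
    (hx : ∀ i : Fin 3, f (ExPt.x i) ∈ ({0, 1, 2} : Set ℝ))
    (hy : ∀ i : Fin 3, f (ExPt.y i) ∈ ({0, 1, 2} : Set ℝ)) :
    ∃ i : Fin 3, |f (ExPt.x i) - f (ExPt.y i)| ≤ 1 := by
  have d0 : dist (ExPt.y 0) (ExPt.x 1) = 1 := by
    rw [ExPt.dist_def]; simp [ExPt.exDist, ExPt.adj]
  have d1 : dist (ExPt.y 1) (ExPt.x 2) = 1 := by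
    rw [ExPt.dist_def]; simp [ExPt.exDist, ExPt.adj]
  have d2 : dist (ExPt.y 2) (ExPt.x 0) = 1 := by
    rw [ExPt.dist_def]; simp [ExPt.exDist, ExPt.adj]
  have h0 := hf (ExPt.y 0) (ExPt.x 1); rw [d0, abs_le] at h0
  have h1 := hf (ExPt.y 1) (ExPt.x 2); rw [d1, abs_le] at h1
  have h2 := hf (ExPt.y 2) (ExPt.x 0); rw [d2, abs_le] at h2
  by_contra hc
  push_neg at hc
  have g0 := stmt18_aux (hx 0) (hy 0) (hc 0)
  have g1 := stmt18_aux (hx 1) (hy 1) (hc 1)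
  have g2 := stmt18_aux (hx 2) (hy 2) (hc 2)
  rcases g0 with ⟨e1, e2⟩|⟨e1, e2⟩ <;> rcases g1 with ⟨e3, e4⟩|⟨e3, e4⟩ <;>
    rcases g2 with ⟨e5, e6⟩|⟨e5, e6⟩ <;>
    linarith [h0.1, h0.2, h1.1, h1.2, h2.1, h2.2, e1, e2, e3, e4, e5, e6]
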